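/- Let G be a finite simple graph. There is a bijection between the set of discrete Morse matchings on the face poset F(G) (matchings inducing no oriented cycles) and the set of rooted spanning forests of G; moreover, under this bijection a discrete Morse matching with exactly k arcs corresponds to a rooted spanning forest with exactly k edges. -/

import Mathlib

/-- The arc relation of the face poset of a finite abstract simplicial complex `X`
(given as a finite family of finite faces): an arc from `σ` down to `τ` whenever
`τ` is a codimension-one face of `σ`. -/
def FaceArc {V : Type*} (X : Finset (Finset V)) (σ τ : Finset V) : Prop :=
  σ ∈ X ∧ τ ∈ X ∧ τ ⊂ σ ∧ τ.card + 1 = σ.card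

/-- The arc relation of the face poset of a simple graph `G`, regarded as a
1-dimensional simplicial complex: an arc from each edge-face `{u, v}` down to
each of its endpoint vertex-faces. -/
def GraphArc {V : Type*} [DecidableEq V] (G : SimpleGraph V) (σ τ : Finset V) : Prop :=
  ∃ u v : V, G.Adj u v ∧ σ = {u, v} ∧ (τ = {u} ∨ τ = {v})

/-- A matching on the digraph with arc relation `A`: a finite set of arcs,
no two of which share an endpoint. -/
def IsMatching {α : Type*} (A : α → α → Prop) (m : Finset (α × α)) : Prop :=
  (∀ p ∈ m, A p.1 p.2) ∧
    ∀ p ∈ m, ∀ q ∈ m, p ≠ q →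
      p.1 ≠ q.1 ∧ p.1 ≠ q.2 ∧ p.2 ≠ q.1 ∧ p.2 ≠ q.2

/-- The arc relation of the digraph obtained from the digraph with arc relation `A`
by reversing the arcs belonging to `m`. -/
def MStep {α : Type*} (A : α → α → Prop) (m : Finset (α × α)) (a b : α) : Prop :=
  (A a b ∧ (a, b) ∉ m) ∨ (A b a ∧ (b, a) ∈ m)

/-- `IsCycleList R l` says the nonempty list `l` of pairwise distinct vertices is a
directed cycle of the digraph with arc relation `R` (consecutive steps, closing up). -/
def IsCycleList {α : Type*} (R : α → α → Prop) : List α → Prop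
  | [] => False
  | a :: l => (a :: l).Nodup ∧ List.Chain R a (l ++ [a])

/-- The set of oriented cycles induced by the matching `m` on the digraph with arc
relation `A` (as lists of vertices; rotated lists represent the same cycle). -/
def cyclesOf {α : Type*} (A : α → α → Prop) (m : Finset (α × α)) : Set (List α) :=
  {l | IsCycleList (MStep A m) l}

/-- `numCycles A m` is `J(m)`, the number of oriented cycles induced by `m`
(cycle lists counted up to rotation). -/
noncomputable def numCycles {α : Type*} (A : α → α → Prop) (m : Finset (α × α)) : ℕ :=
  (Quotient.mk (List.IsRotated.setoid α) '' cyclesOf A m).ncard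

/-!
A matching on `F(G)` can only use arcs `{v, w} → {v}` with `vw ∈ E(G)`, and being a matching
says exactly that `f v := w` is a well-defined partial "parent" map on `V` without 2-cycles.
The oriented cycles of `F_m(G)` alternate `{v} → {v, f v} → {f v}`, so `m` is Morse iff `f` has
no cycles at all. An acyclic parent map is the same thing as a rooted spanning forest: the edges
`v — f v` form the forest and the parentless vertices are the roots; conversely the parent of `v`
in a rooted forest is its unique neighbour closer to the root. Arcs of `m` and edges of the
forest both correspond to the vertices that have a parent.
-/

open Relation

section CycleLists

variable {α : Type*} {R : α → α → Prop}

theorem Relation.TransGen.exists_nodup_chain {a b : α} (h : TransGen R a b) :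
    ∃ l, (a :: l).Nodup ∧ List.IsChain R (a :: (l ++ [b])) := by
  induction h using Relation.TransGen.head_induction_on with
  | single hab => exact ⟨[], List.nodup_singleton _, List.isChain_pair.mpr hab⟩
  | @head a c hac _ ih =>
    obtain ⟨l, hnd, hch⟩ := ih
    by_cases ha : a ∈ c :: l
    · -- shortcut the chain at the later occurrence of `a`
      obtain ⟨s, t, hst⟩ := List.append_of_mem ha
      refine ⟨t, hnd.sublist (hst ▸ List.sublist_append_right s (a :: t)), hch.suffix ?_⟩
      have : c :: (l ++ [b]) = s ++ a :: (t ++ [b]) := by rw [← List.cons_append, hst]; simp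
      exact this ▸ List.suffix_append s _
    · exact ⟨c :: l, List.nodup_cons.mpr ⟨ha, hnd⟩,
        List.isChain_cons_cons.mpr ⟨hac, hch⟩⟩

theorem Relation.transGen_of_isChain :
    ∀ {a b : α} {l : List α}, List.IsChain R (a :: (l ++ [b])) → TransGen R a b
  | _, _, [], h => .single (List.isChain_pair.mp h)
  | _, _, _ :: _, h =>
    .head (List.isChain_cons_cons.mp h).1 (transGen_of_isChain (List.isChain_cons_cons.mp h).2)

theorem exists_isCycleList_iff : (∃ l, IsCycleList R l) ↔ ∃ a, TransGen R a a := by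
  constructor
  · rintro ⟨_ | ⟨a, l⟩, h⟩
    · exact h.elim
    · exact ⟨a, transGen_of_isChain h.2⟩
  · rintro ⟨a, h⟩
    obtain ⟨l, hnd, hch⟩ := h.exists_nodup_chain
    exact ⟨a :: l, hnd, hch⟩

theorem Relation.TransGen.exists_rel_transGen_self {a : α} (h : TransGen R a a) :
    ∃ b, R a b ∧ TransGen R b b := by
  obtain ⟨b, hab, hba⟩ := TransGen.head'_iff.mp h
  exact ⟨b, hab, TransGen.tail' hba hab⟩

theorem wellFounded_of_forall_not_transGen [Finite α] (h : ∀ a, ¬TransGen R a a) :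
    WellFounded R :=
  have : Std.Irrefl (TransGen R) := ⟨h⟩
  (Finite.wellFounded_of_trans_of_irrefl (TransGen R)).mono fun _ _ => .single

theorem exists_transGen_self_of_forall_exists [Finite α] {s : Set α} (hs : s.Nonempty)
    (h : ∀ a ∈ s, ∃ b ∈ s, R a b) : ∃ a, TransGen R a a := by
  by_contra! hR
  have hwf : WellFounded (flip R) :=
    wellFounded_of_forall_not_transGen fun a ha => hR a (transGen_swap.mp ha)
  obtain ⟨a, ha, hmin⟩ := hwf.has_min s hs
  obtain ⟨b, hb, hab⟩ := h a ha
  exact hmin b hb hab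

end CycleLists

namespace SimpleGraph

variable {V : Type*}

/-- `f v = some w` makes the neighbour `w` the parent of `v`; the vertices with `f v = none` are
the roots. -/
structure IsParentMap (G : SimpleGraph V) (f : V → Option V) : Prop where
  adj : ∀ v w, f v = some w → G.Adj v w
  acyclic : ∀ v, ¬TransGen (fun a b => f a = some b) v v

namespace ParentMap

variable {f : V → Option V}

def graph (f : V → Option V) : SimpleGraph V :=
  fromRel fun a b => f a = some b

def arcs [Fintype V] [DecidableEq V] (f : V → Option V) : Finset (V × V) :=
  {p | f p.1 = some p.2}

open Classical in
/-- Junk value `v` when the parent relation is not well-founded. -/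
noncomputable def root (f : V → Option V) (v : V) : V :=
  if hf : WellFounded fun a b => f b = some a then
    hf.fix (fun v ih =>
      match h : f v with
      | none => v
      | some w => ih w h) v
  else v

theorem root_of_eq_none (hf : WellFounded fun a b => f b = some a) {v : V} (h : f v = none) :
    root f v = v := by
  rw [root, dif_pos hf, hf.fix_eq]
  split <;> simp_all

theorem root_of_eq_some (hf : WellFounded fun a b => f b = some a) {v w : V} (h : f v = some w) :
    root f v = root f w := by
  rw [root, root, dif_pos hf, hf.fix_eq]
  split
  · simp_all
  · rename_i h'
    cases h.symm.trans h'
    simp only [dif_pos hf]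

theorem graph_adj {u v : V} : (graph f).Adj u v ↔ u ≠ v ∧ (f u = some v ∨ f v = some u) :=
  fromRel_adj _ u v

theorem graph_le {G : SimpleGraph V} (hG : ∀ v w, f v = some w → G.Adj v w) :
    graph f ≤ G := by
  intro u v huv
  rcases (graph_adj.mp huv).2 with h | h
  · exact hG u v h
  · exact (hG v u h).symm

theorem reachable_root (hf : WellFounded fun a b => f b = some a) (v : V) :
    (graph f).Reachable v (root f v) := by
  induction v using hf.induction with
  | _ v ih =>
    cases h : f v with
    | none => rw [root_of_eq_none hf h]
    | some w =>
      rw [root_of_eq_some hf h]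
      have hvw : v ≠ w := by rintro rfl; exact hf.irrefl.irrefl v h
      exact (graph_adj.mpr ⟨hvw, .inl h⟩).reachable.trans (ih w h)

theorem root_eq_of_reachable (hf : WellFounded fun a b => f b = some a) {u v : V}
    (huv : (graph f).Reachable u v) :
    root f u = root f v := by
  rw [reachable_iff_reflTransGen] at huv
  induction huv with
  | refl => rfl
  | tail _ hadj ih =>
    rcases (graph_adj.mp hadj).2 with h | h
    · exact ih.trans (root_of_eq_some hf h)
    · exact ih.trans (root_of_eq_some hf h).symm

theorem wellFounded_of_acyclic [Finite V] (hf : ∀ v, ¬TransGen (fun a b => f a = some b) v v) :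
    WellFounded fun a b => f b = some a :=
  wellFounded_of_forall_not_transGen fun a ha => hf a (transGen_swap.mp ha)

theorem isAcyclic_graph [Finite V] (hf : ∀ v, ¬TransGen (fun a b => f a = some b) v v) :
    (graph f).IsAcyclic := by
  classical
  intro v c hc
  -- a vertex of the cycle none of whose children lies on the cycle has both cycle
  -- neighbours as its parent
  obtain ⟨u, hu, hmin⟩ := (wellFounded_of_forall_not_transGen hf).has_min {x | x ∈ c.support}
    ⟨v, c.start_mem_support⟩
  have hc' := hc.rotate hu
  have parent_of_adj : ∀ x ∈ (c.rotate u hu).support, (graph f).Adj u x → f u = some x :=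
    fun x hx hadj => (graph_adj.mp hadj).2.resolve_right
      (hmin x ((c.mem_support_rotate_iff u hu).mp hx))
  apply hc'.snd_ne_penultimate
  apply Option.some_injective
  rw [← parent_of_adj _ (Walk.getVert_mem_support _ 1) (Walk.adj_snd hc'.not_nil),
    ← parent_of_adj _ (Walk.getVert_mem_support _ _) (Walk.adj_penultimate hc'.not_nil).symm]

variable [Fintype V] [DecidableEq V]

theorem mem_arcs {p : V × V} : p ∈ arcs f ↔ f p.1 = some p.2 := by
  simp [arcs]

theorem ncard_edgeSet_graph (hf : ∀ v, ¬TransGen (fun a b => f a = some b) v v) :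
    (graph f).edgeSet.ncard = (arcs f).card := by
  have hedges : (graph f).edgeSet = (fun p : V × V => s(p.1, p.2)) '' arcs f := by
    ext ⟨a, b⟩
    simp only [mem_edgeSet, graph_adj, Set.mem_image, Finset.mem_coe, mem_arcs, Prod.exists,
      Sym2.eq_iff]
    constructor
    · rintro ⟨-, h | h⟩
      · exact ⟨a, b, h, .inl ⟨rfl, rfl⟩⟩
      · exact ⟨b, a, h, .inr ⟨rfl, rfl⟩⟩
    · rintro ⟨x, y, h, ⟨rfl, rfl⟩ | ⟨rfl, rfl⟩⟩
      · exact ⟨fun hxy => hf x (.single (hxy ▸ h)), .inl h⟩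
      · exact ⟨fun hxy => hf x (.single (hxy ▸ h)), .inr h⟩
  rw [hedges, Set.InjOn.ncard_image, Set.ncard_coe_finset]
  rintro ⟨a, b⟩ hab ⟨c, d⟩ hcd he
  simp only [Finset.mem_coe, mem_arcs] at hab hcd
  rcases Sym2.eq_iff.mp he with ⟨rfl, rfl⟩ | ⟨rfl, rfl⟩
  · rfl
  · exact (hf a (.head hab (.single hcd))).elim

end ParentMap

variable {F : SimpleGraph V}

theorem Reachable.exists_adj_dist_lt {u v : V} (h : F.Reachable u v) (hne : u ≠ v) :
    ∃ w, F.Adj v w ∧ F.dist u w < F.dist u v := by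
  obtain ⟨p, hp⟩ := h.symm.exists_walk_length_eq_dist
  cases p with
  | nil => exact absurd rfl hne
  | @cons _ w _ hvw q =>
    refine ⟨w, hvw, ?_⟩
    rw [dist_comm, dist_comm (u := u), ← hp, Walk.length_cons]
    exact Nat.lt_succ_of_le (dist_le q)

theorem IsAcyclic.eq_of_adj_of_dist_lt (hF : F.IsAcyclic) {ρ u v w : V} (hu : F.Reachable ρ u)
    (hv : F.Adj u v) (hw : F.Adj u w) (hvd : F.dist ρ v < F.dist ρ u)
    (hwd : F.dist ρ w < F.dist ρ u) : v = w := by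
  -- a shortest path to a closer neighbour, extended by the last edge, is a shortest path to `u`
  have shortest : ∀ x, F.Adj u x → F.dist ρ x < F.dist ρ u →
      ∃ (p : F.Walk ρ x) (hx : F.Adj x u), (p.concat hx).IsPath := by
    intro x hx hxd
    obtain ⟨p, hp⟩ := (hu.trans hx.reachable).exists_walk_length_eq_dist
    refine ⟨p, hx.symm, (p.concat hx.symm).isPath_of_length_eq_dist ?_⟩
    have := hF.dist_eq_dist_add_one_of_adj_of_reachable ρ hx hu
    rw [Walk.length_concat, hp]
    omega
  obtain ⟨p, hpv, hp⟩ := shortest v hv hvd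
  obtain ⟨q, hqw, hq⟩ := shortest w hw hwd
  have hpq := congrArg Subtype.val ((hF.subsingleton_path ρ u).elim ⟨_, hp⟩ ⟨_, hq⟩)
  exact (Walk.concat_inj hpq).1

section Forest

variable {r : V → V}

open Classical in
noncomputable def forestParent (F : SimpleGraph V) (r : V → V) (v : V) : Option V :=
  if h : ∃ w, F.Adj v w ∧ F.dist (r v) w < F.dist (r v) v then some h.choose else none

theorem forestParent_eq_some_iff (hF : F.IsAcyclic) (hreach : ∀ v, F.Reachable v (r v))
    {v w : V} :
    forestParent F r v = some w ↔ F.Adj v w ∧ F.dist (r v) w < F.dist (r v) v := by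
  unfold forestParent
  split_ifs with h
  · rw [Option.some_inj]
    constructor
    · rintro rfl
      exact h.choose_spec
    · intro hw
      exact hF.eq_of_adj_of_dist_lt (hreach v).symm h.choose_spec.1 hw.1 h.choose_spec.2 hw.2
  · simp only [false_iff]
    exact fun hw => h ⟨w, hw⟩

theorem forestParent_eq_none_iff (hreach : ∀ v, F.Reachable v (r v)) {v : V} :
    forestParent F r v = none ↔ v = r v := by
  unfold forestParent
  split_ifs with h
  · simp only [false_iff]
    rintro hv
    obtain ⟨w, -, hw⟩ := h
    rw [← hv, dist_self] at hw
    exact Nat.not_lt_zero _ hw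
  · simp only [true_iff]
    by_contra hne
    exact h ((hreach v).symm.exists_adj_dist_lt (Ne.symm hne))

theorem acyclic_forestParent (hF : F.IsAcyclic) (hreach : ∀ v, F.Reachable v (r v))
    (hconst : ∀ u v, F.Reachable u v → r u = r v) (v : V) :
    ¬TransGen (fun a b => forestParent F r a = some b) v v := by
  -- the distance to the root strictly decreases along parent steps
  have step {a b : V} (h : forestParent F r a = some b) : F.dist (r b) b < F.dist (r a) a := by
    obtain ⟨hadj, hlt⟩ := (forestParent_eq_some_iff hF hreach).mp h
    exact hconst b a hadj.symm.reachable ▸ hlt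
  intro hv
  have := TransGen.lift (p := (· > ·)) (fun x => F.dist (r x) x) (fun _ _ => step) v v hv
  exact lt_irrefl _ (transGen_eq_self (r := ((· > ·) : ℕ → ℕ → Prop)) ▸ this)

theorem isParentMap_forestParent {G : SimpleGraph V} (hle : F ≤ G) (hF : F.IsAcyclic)
    (hreach : ∀ v, F.Reachable v (r v)) (hconst : ∀ u v, F.Reachable u v → r u = r v) :
    G.IsParentMap (forestParent F r) where
  adj _ _ h := hle ((forestParent_eq_some_iff hF hreach).mp h).1
  acyclic := acyclic_forestParent hF hreach hconst

theorem ParentMap.graph_forestParent (hF : F.IsAcyclic) (hreach : ∀ v, F.Reachable v (r v))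
    (hconst : ∀ u v, F.Reachable u v → r u = r v) : ParentMap.graph (forestParent F r) = F := by
  ext u v
  rw [ParentMap.graph_adj, forestParent_eq_some_iff hF hreach,
    forestParent_eq_some_iff hF hreach]
  constructor
  · rintro ⟨-, ⟨huv, -⟩ | ⟨hvu, -⟩⟩
    · exact huv
    · exact hvu.symm
  · intro huv
    refine ⟨huv.ne, ?_⟩
    rw [hconst v u huv.symm.reachable]
    rcases hF.dist_eq_dist_add_one_of_adj_of_reachable (r u) huv (hreach u).symm with h | h
    · exact .inl ⟨huv, by omega⟩
    · exact .inr ⟨huv.symm, by omega⟩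

theorem ParentMap.root_forestParent [Finite V] (hF : F.IsAcyclic)
    (hreach : ∀ v, F.Reachable v (r v)) (hconst : ∀ u v, F.Reachable u v → r u = r v) :
    ParentMap.root (forestParent F r) = r := by
  have hwf := wellFounded_of_acyclic (acyclic_forestParent hF hreach hconst)
  funext v
  induction v using hwf.induction with
  | _ v ih =>
    cases h : forestParent F r v with
    | none => rw [ParentMap.root_of_eq_none hwf h, ← (forestParent_eq_none_iff hreach).mp h]
    | some w =>
      rw [ParentMap.root_of_eq_some hwf h, ih w h,
        hconst w v ((forestParent_eq_some_iff hF hreach).mp h).1.symm.reachable]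

theorem ParentMap.forestParent_graph_root [Finite V] {f : V → Option V}
    (hf : ∀ v, ¬TransGen (fun a b => f a = some b) v v) :
    forestParent (ParentMap.graph f) (ParentMap.root f) = f := by
  have hwf := wellFounded_of_acyclic hf
  have hF := isAcyclic_graph hf
  have hreach : ∀ v, (graph f).Reachable v (root f v) := reachable_root hwf
  funext v
  induction v using hwf.induction with
  | _ v ih =>
    cases h : f v with
    | none => rw [forestParent_eq_none_iff hreach, root_of_eq_none hwf h]
    | some w =>
      have hvw : (graph f).Adj v w :=
        graph_adj.mpr ⟨fun hvw => hf v (.single (hvw ▸ h)), .inl h⟩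
      rw [forestParent_eq_some_iff hF hreach]
      refine ⟨hvw, ?_⟩
      rcases hF.dist_eq_dist_add_one_of_adj_of_reachable (root f v) hvw (hreach v).symm
        with hd | hd
      · omega
      · -- otherwise `v` would be the parent of `w` in the forest, i.e. `f` would have a 2-cycle
        have hwv : forestParent (graph f) (root f) w = some v := by
          rw [forestParent_eq_some_iff hF hreach, ← root_of_eq_some hwf h]
          exact ⟨hvw.symm, by omega⟩
        exact (hf v (.head h (.single (ih w h ▸ hwv)))).elim

end Forest

open ParentMap in
noncomputable def parentMapEquivRootedForest [Finite V] (G : SimpleGraph V) :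
    {f : V → Option V // G.IsParentMap f} ≃
      {p : SimpleGraph V × (V → V) //
        p.1 ≤ G ∧ p.1.IsAcyclic ∧ (∀ v : V, p.1.Reachable v (p.2 v)) ∧
          (∀ u v : V, p.1.Reachable u v → p.2 u = p.2 v)} where
  toFun f :=
    have hwf := wellFounded_of_acyclic f.2.acyclic
    ⟨(graph f.1, root f.1), graph_le f.2.adj, isAcyclic_graph f.2.acyclic, reachable_root hwf,
      fun _ _ => root_eq_of_reachable hwf⟩
  invFun p :=
    ⟨forestParent p.1.1 p.1.2, isParentMap_forestParent p.2.1 p.2.2.1 p.2.2.2.1 p.2.2.2.2⟩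
  left_inv f := Subtype.ext (forestParent_graph_root f.2.acyclic)
  right_inv := by
    rintro ⟨⟨F, r⟩, -, hF, hreach, hconst⟩
    exact Subtype.ext <| Prod.ext (graph_forestParent hF hreach hconst)
      (root_forestParent hF hreach hconst)

theorem ncard_edgeSet_parentMapEquivRootedForest [Fintype V] [DecidableEq V]
    {G : SimpleGraph V} (f : {f : V → Option V // G.IsParentMap f}) :
    (parentMapEquivRootedForest G f).1.1.edgeSet.ncard = (ParentMap.arcs f.1).card :=
  ParentMap.ncard_edgeSet_graph f.2.acyclic

end SimpleGraph

theorem Finset.pair_ne_singleton {α : Type*} [DecidableEq α] {a b : α} (hab : a ≠ b) (c : α) :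
    ({a, b} : Finset α) ≠ {c} := by
  intro h
  simpa [Finset.card_pair hab] using congrArg Finset.card h

theorem Finset.eq_of_pair_eq_pair {α : Type*} [DecidableEq α] {a b c : α}
    (h : ({a, b} : Finset α) = {a, c}) : b = c := by
  have hb : b ∈ ({a, c} : Finset α) := h ▸ by simp
  have hc : c ∈ ({a, b} : Finset α) := h ▸ by simp
  simp only [Finset.mem_insert, Finset.mem_singleton] at hb hc
  grind

theorem IsMatching.eq_of_fst_eq {α : Type*} {A : α → α → Prop} {m : Finset (α × α)}
    (hm : IsMatching A m) {p q : α × α} (hp : p ∈ m) (hq : q ∈ m) (h : p.1 = q.1) :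
    p = q := by
  by_contra hpq
  exact (hm.2 p hp q hq hpq).1 h

theorem IsMatching.eq_of_snd_eq {α : Type*} {A : α → α → Prop} {m : Finset (α × α)}
    (hm : IsMatching A m) {p q : α × α} (hp : p ∈ m) (hq : q ∈ m) (h : p.2 = q.2) :
    p = q := by
  by_contra hpq
  exact (hm.2 p hp q hq hpq).2.2.2 h

theorem forall_not_mem_cyclesOf_iff {α : Type*} {A : α → α → Prop} {m : Finset (α × α)} :
    (∀ γ, γ ∉ cyclesOf A m) ↔ ∀ a, ¬TransGen (MStep A m) a a := by
  simpa [cyclesOf] using not_congr (exists_isCycleList_iff (R := MStep A m))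

section GraphFacePoset

variable {V : Type*} [DecidableEq V] {G : SimpleGraph V} {m : Finset (Finset V × Finset V)}
  {f : V → Option V}

theorem graphArc_iff {σ τ : Finset V} :
    GraphArc G σ τ ↔ ∃ v w, G.Adj v w ∧ σ = {v, w} ∧ τ = {v} := by
  constructor
  · rintro ⟨u, v, huv, rfl, rfl | rfl⟩
    · exact ⟨u, v, huv, rfl, rfl⟩
    · exact ⟨v, u, huv.symm, Finset.pair_comm u v, rfl⟩
  · rintro ⟨v, w, hvw, rfl, rfl⟩
    exact ⟨v, w, hvw, rfl, .inl rfl⟩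

theorem graphArc_pair_singleton_iff {v w : V} : GraphArc G {v, w} {v} ↔ G.Adj v w := by
  refine ⟨fun h => ?_, fun h => ⟨v, w, h, rfl, .inl rfl⟩⟩
  obtain ⟨a, b, hab, hσ, hτ⟩ := graphArc_iff.mp h
  obtain rfl := Finset.singleton_injective hτ
  exact Finset.eq_of_pair_eq_pair hσ ▸ hab

open Classical in
/-- The arc `{v, w} → {v}` makes `w` the parent of `v`. -/
noncomputable def parentMapOfMatching (m : Finset (Finset V × Finset V)) (v : V) : Option V :=
  if h : ∃ w, ({v, w}, {v}) ∈ m then some h.choose else none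

theorem parentMapOfMatching_eq_some_iff (hm : IsMatching (GraphArc G) m) {v w : V} :
    parentMapOfMatching m v = some w ↔ ({v, w}, {v}) ∈ m := by
  unfold parentMapOfMatching
  split_ifs with h
  · rw [Option.some_inj]
    refine ⟨fun hw => hw ▸ h.choose_spec, fun hw => ?_⟩
    exact Finset.eq_of_pair_eq_pair (congrArg Prod.fst (hm.eq_of_snd_eq h.choose_spec hw rfl))
  · simp only [false_iff]
    exact fun hw => h ⟨w, hw⟩

theorem transGen_mStep_of_transGen (hm : IsMatching (GraphArc G) m) {v w : V}
    (h : TransGen (fun a b => ({a, b}, {a}) ∈ m) v w) :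
    TransGen (MStep (GraphArc G) m) {v} {w} := by
  refine TransGen.lift' (fun x => ({x} : Finset V)) (fun a b hab => ?_) v w h
  have hadj := graphArc_pair_singleton_iff.mp (hm.1 _ hab)
  -- go up along the matched arc, then down along the other (unmatched) arc of the edge
  have hdown : (({a, b}, {b}) : Finset V × Finset V) ∉ m := fun hb =>
    hadj.ne (Finset.singleton_injective (congrArg Prod.snd (hm.eq_of_fst_eq hab hb rfl)))
  exact .head (.inr ⟨hm.1 _ hab, hab⟩)
    (.single (.inl ⟨⟨a, b, hadj, rfl, .inr rfl⟩, hdown⟩))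

theorem isParentMap_parentMapOfMatching (hm : IsMatching (GraphArc G) m)
    (hmorse : ∀ σ, ¬TransGen (MStep (GraphArc G) m) σ σ) :
    G.IsParentMap (parentMapOfMatching m) where
  adj _ _ h := graphArc_pair_singleton_iff.mp (hm.1 _ ((parentMapOfMatching_eq_some_iff hm).mp h))
  acyclic v hv := hmorse {v} <| transGen_mStep_of_transGen hm <|
    TransGen.mono (fun _ _ h => (parentMapOfMatching_eq_some_iff hm).mp h) v v hv

variable [Fintype V]

def matchingOfParentMap (f : V → Option V) : Finset (Finset V × Finset V) :=
  (SimpleGraph.ParentMap.arcs f).image fun p => ({p.1, p.2}, {p.1})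

theorem mem_matchingOfParentMap {p : Finset V × Finset V} :
    p ∈ matchingOfParentMap f ↔ ∃ v w, f v = some w ∧ ({v, w}, {v}) = p := by
  simp [matchingOfParentMap, SimpleGraph.ParentMap.mem_arcs]

theorem pair_mem_matchingOfParentMap {v w : V} :
    ({v, w}, {v}) ∈ matchingOfParentMap f ↔ f v = some w := by
  refine ⟨fun h => ?_, fun h => mem_matchingOfParentMap.mpr ⟨v, w, h, rfl⟩⟩
  obtain ⟨a, b, hab, he⟩ := mem_matchingOfParentMap.mp h
  simp only [Prod.mk.injEq] at he
  obtain rfl := Finset.singleton_injective he.2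
  exact Finset.eq_of_pair_eq_pair he.1 ▸ hab

theorem card_matchingOfParentMap :
    (matchingOfParentMap f).card = (SimpleGraph.ParentMap.arcs f).card := by
  refine Finset.card_image_of_injective _ fun p q h => ?_
  simp only [Prod.mk.injEq] at h
  obtain h₁ := Finset.singleton_injective h.2
  exact Prod.ext h₁ (Finset.eq_of_pair_eq_pair (h₁ ▸ h.1))

theorem matchingOfParentMap_parentMapOfMatching (hm : IsMatching (GraphArc G) m) :
    matchingOfParentMap (parentMapOfMatching m) = m := by
  ext p
  rw [mem_matchingOfParentMap]
  constructor
  · rintro ⟨v, w, h, rfl⟩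
    exact (parentMapOfMatching_eq_some_iff hm).mp h
  · intro hp
    obtain ⟨v, w, -, h₁, h₂⟩ := graphArc_iff.mp (hm.1 p hp)
    refine ⟨v, w, (parentMapOfMatching_eq_some_iff hm).mpr ?_, Prod.ext h₁.symm h₂.symm⟩
    rwa [← h₁, ← h₂]

theorem parentMapOfMatching_matchingOfParentMap :
    parentMapOfMatching (matchingOfParentMap f) = f := by
  funext v
  unfold parentMapOfMatching
  simp only [pair_mem_matchingOfParentMap]
  split_ifs with h
  · exact h.choose_spec.symm
  · cases hv : f v with
    | none => rfl
    | some w => exact (h ⟨w, hv⟩).elim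

theorem isMatching_matchingOfParentMap (hf : G.IsParentMap f) :
    IsMatching (GraphArc G) (matchingOfParentMap f) := by
  refine ⟨fun p hp => ?_, fun p hp q hq hpq => ?_⟩
  · obtain ⟨v, w, h, rfl⟩ := mem_matchingOfParentMap.mp hp
    exact graphArc_pair_singleton_iff.mpr (hf.adj v w h)
  obtain ⟨v, w, hvw, rfl⟩ := mem_matchingOfParentMap.mp hp
  obtain ⟨v', w', hvw', rfl⟩ := mem_matchingOfParentMap.mp hq
  have hne : v ≠ v' := by
    rintro rfl
    obtain rfl := Option.some_injective _ (hvw.symm.trans hvw')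
    exact hpq rfl
  refine ⟨fun h => ?_, Finset.pair_ne_singleton (hf.adj v w hvw).ne v',
    (Finset.pair_ne_singleton (hf.adj v' w' hvw').ne v).symm,
    fun h => hne (Finset.singleton_injective h)⟩
  -- two arcs on the same edge would make `v` and `v'` each other's parents
  replace h : ({v, w} : Finset V) = {v', w'} := h
  have hv : v ∈ ({v', w'} : Finset V) := h ▸ by simp
  have hv' : v' ∈ ({v, w} : Finset V) := h.symm ▸ by simp
  simp only [Finset.mem_insert, Finset.mem_singleton, hne, Ne.symm hne, false_or] at hv hv'
  subst hv hv'
  exact hf.acyclic v (.head hvw (.single hvw'))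

theorem exists_eq_singleton_of_mStep {σ τ : Finset V}
    (h : MStep (GraphArc G) (matchingOfParentMap f) σ τ) :
    (∃ v, σ = {v}) ∨ ∃ v, τ = {v} := by
  rcases h with ⟨harc, -⟩ | ⟨-, hmem⟩
  · obtain ⟨v, -, -, -, rfl⟩ := graphArc_iff.mp harc
    exact .inr ⟨v, rfl⟩
  · obtain ⟨v, _, -, he⟩ := mem_matchingOfParentMap.mp hmem
    exact .inl ⟨v, (congrArg Prod.snd he).symm⟩

theorem exists_eq_some_of_mStep_singleton {v : V} {τ : Finset V}
    (h : MStep (GraphArc G) (matchingOfParentMap f) {v} τ) :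
    ∃ w, f v = some w ∧ τ = {v, w} := by
  rcases h with ⟨harc, -⟩ | ⟨-, hmem⟩
  · obtain ⟨a, b, hab, h, -⟩ := graphArc_iff.mp harc
    exact (Finset.pair_ne_singleton hab.ne v h.symm).elim
  · obtain ⟨a, w, haw, he⟩ := mem_matchingOfParentMap.mp hmem
    simp only [Prod.mk.injEq] at he
    obtain rfl := Finset.singleton_injective he.2
    exact ⟨w, haw, he.1.symm⟩

theorem eq_singleton_of_mStep_pair (hf : G.IsParentMap f) {v w : V} (hvw : f v = some w)
    {ρ : Finset V} (h : MStep (GraphArc G) (matchingOfParentMap f) {v, w} ρ) : ρ = {w} := by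
  have hne := (hf.adj v w hvw).ne
  rcases h with ⟨harc, hnot⟩ | ⟨-, hmem⟩
  · obtain ⟨a, b, -, hσ, rfl⟩ := graphArc_iff.mp harc
    have ha : a ∈ ({v, w} : Finset V) := hσ ▸ by simp
    rcases Finset.mem_insert.mp ha with rfl | ha
    · obtain rfl := Finset.eq_of_pair_eq_pair hσ
      exact (hnot (pair_mem_matchingOfParentMap.mpr hvw)).elim
    · rw [Finset.mem_singleton.mp ha]
  · obtain ⟨a, _, -, he⟩ := mem_matchingOfParentMap.mp hmem
    exact (Finset.pair_ne_singleton hne a (congrArg Prod.snd he).symm).elim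

theorem exists_transGen_of_transGen_mStep [Finite V] (hf : G.IsParentMap f) {σ : Finset V}
    (h : TransGen (MStep (GraphArc G) (matchingOfParentMap f)) σ σ) :
    ∃ v, TransGen (fun a b => f a = some b) v v := by
  refine exists_transGen_self_of_forall_exists
    (s := {v | TransGen (MStep (GraphArc G) (matchingOfParentMap f)) {v} {v}}) ?_ ?_
  · obtain ⟨τ, hστ, hτ⟩ := h.exists_rel_transGen_self
    rcases exists_eq_singleton_of_mStep hστ with ⟨v, rfl⟩ | ⟨v, rfl⟩
    exacts [⟨v, h⟩, ⟨v, hτ⟩]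
  · -- two steps of an oriented cycle starting at a vertex `{v}` lead to `{f v}`
    intro v hv
    obtain ⟨τ, hvτ, hτ⟩ := hv.exists_rel_transGen_self
    obtain ⟨w, hvw, rfl⟩ := exists_eq_some_of_mStep_singleton hvτ
    obtain ⟨ρ, hτρ, hρ⟩ := hτ.exists_rel_transGen_self
    obtain rfl := eq_singleton_of_mStep_pair hf hvw hτρ
    exact ⟨w, hρ, hvw⟩

noncomputable def morseMatchingEquivParentMap [Finite V] (G : SimpleGraph V) :
    {m : Finset (Finset V × Finset V) //
        IsMatching (GraphArc G) m ∧ ∀ γ : List (Finset V), γ ∉ cyclesOf (GraphArc G) m} ≃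
      {f : V → Option V // G.IsParentMap f} where
  toFun m := ⟨parentMapOfMatching m.1,
    isParentMap_parentMapOfMatching m.2.1 (forall_not_mem_cyclesOf_iff.mp m.2.2)⟩
  invFun f := ⟨matchingOfParentMap f.1, isMatching_matchingOfParentMap f.2,
    forall_not_mem_cyclesOf_iff.mpr fun _ hσ =>
      let ⟨v, hv⟩ := exists_transGen_of_transGen_mStep f.2 hσ
      f.2.acyclic v hv⟩
  left_inv m := Subtype.ext (matchingOfParentMap_parentMapOfMatching m.2.1)
  right_inv _ := Subtype.ext parentMapOfMatching_matchingOfParentMap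

theorem card_eq_card_arcs_morseMatchingEquivParentMap
    (m : {m : Finset (Finset V × Finset V) //
        IsMatching (GraphArc G) m ∧ ∀ γ : List (Finset V), γ ∉ cyclesOf (GraphArc G) m}) :
    m.1.card = (SimpleGraph.ParentMap.arcs (morseMatchingEquivParentMap G m).1).card := by
  conv_lhs => rw [← matchingOfParentMap_parentMapOfMatching m.2.1]
  exact card_matchingOfParentMap

end GraphFacePoset

/-- Chari–Joswig: for a finite simple graph `G`, there is a bijection
between the discrete Morse matchings on the face poset `F(G)` (matchings inducing no
oriented cycles) and the rooted spanning forests of `G` (spanning acyclic subgraphs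
together with a choice of one root per connected component, encoded by the function
assigning to each vertex the root of its component); a matching with `k` arcs
corresponds to a forest with `k` edges. -/
theorem morse_matchings_equiv_rooted_spanning_forests
    {V : Type*} [Fintype V] [DecidableEq V] (G : SimpleGraph V) :
    ∃ e : {m : Finset (Finset V × Finset V) //
              IsMatching (GraphArc G) m ∧
              ∀ γ : List (Finset V), γ ∉ cyclesOf (GraphArc G) m} ≃
          {p : SimpleGraph V × (V → V) //
              p.1 ≤ G ∧ p.1.IsAcyclic ∧
              (∀ v : V, p.1.Reachable v (p.2 v)) ∧
              (∀ u v : V, p.1.Reachable u v → p.2 u = p.2 v)},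
      ∀ m, (m.val).card = ((e m).val.1.edgeSet.ncard) := by
  refine ⟨(morseMatchingEquivParentMap G).trans (SimpleGraph.parentMapEquivRootedForest G),
    fun m => ?_⟩
  rw [Equiv.trans_apply, SimpleGraph.ncard_edgeSet_parentMapEquivRootedForest]
  exact card_eq_card_arcs_morseMatchingEquivParentMap m
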